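/- arXiv:1906.11392 — 4 statements merged into one kernel-verified Lean document; each statement's English description precedes it below -/
import Mathlib

section
/- Let P and Q be probability measures on a measurable space (Ω, F) with P absolutely continuous with respect to Q, and let Z : Ω → [0,1] be any F-measurable random variable. Then KL(P ‖ Q) ≥ kl(E_P[Z], E_Q[Z]), where kl(a,b) := a·log(a/b) + (1−a)·log((1−a)/(1−b)) is the Kullback–Leibler divergence between Bernoulli distributions of means a and b. In particular, for any event E ∈ F, KL(P ‖ Q) ≥ kl(P(E), Q(E)). -/
/-!
STATEMENT 5 (data-processing / change-of-measure inequality):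
For probability measures `P ≪ Q` and any measurable `Z : Ω → [0,1]`,
`KL(P‖Q) ≥ kl(E_P[Z], E_Q[Z])`, and in particular `KL(P‖Q) ≥ kl(P(E), Q(E))`
for every measurable event `E`.
-/

open MeasureTheory
open scoped ENNReal Classical

/-- Kullback–Leibler divergence `∫ log(dP/dQ) dP`, valued in `[0,∞]`:
it is `∞` unless `P ≪ Q` and the log-likelihood ratio is `P`-integrable. -/
noncomputable def klDivergence {Ω : Type*} [MeasurableSpace Ω] (P Q : Measure Ω) : ℝ≥0∞ :=
  if P ≪ Q ∧ Integrable (fun ω => Real.log (P.rnDeriv Q ω).toReal) P then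
    ENNReal.ofReal (∫ ω, Real.log (P.rnDeriv Q ω).toReal ∂P)
  else ∞

/-- Binary (Bernoulli) Kullback–Leibler divergence `kl(a,b)`, valued in `[0,∞]`,
with the conventions `0·log 0 = 0`, and `kl(a,b) = ∞` if `b = 0 < a` or `b = 1 > a`. -/
noncomputable def klBernoulli (a b : ℝ) : ℝ≥0∞ :=
  if (b = 0 ∧ 0 < a) ∨ (b = 1 ∧ a < 1) then ∞
  else ENNReal.ofReal (a * Real.log (a / b) + (1 - a) * Real.log ((1 - a) / (1 - b)))

/-! kl(a, b) is the Kullback–Leibler divergence between the Bernoulli laws `Ber(a)` and `Ber(b)`,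
and these are the images of `P` and `Q` under the Markov kernel `ω ↦ Ber(Z ω)`. The data
processing inequality for Markov kernels bounds their divergence by `KL(P ‖ Q)`; events are the
case `Z = 𝟙_E`. -/

open ProbabilityTheory InformationTheory unitInterval

lemma klDivergence_eq_klDiv {Ω : Type*} [MeasurableSpace Ω] {P Q : Measure Ω}
    (h : P.real Set.univ = Q.real Set.univ) : klDivergence P Q = klDiv P Q := by
  by_cases hac : P ≪ Q ∧ Integrable (llr P Q) P
  · rw [klDivergence, ← llr_def, if_pos hac, klDiv_of_ac_of_integrable hac.1 hac.2, h,
      add_sub_cancel_right]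
  · rw [klDivergence, ← llr_def, if_neg hac, eq_comm, klDiv_eq_top_iff]
    exact fun hPQ hint => hac ⟨hPQ, hint⟩

lemma unitInterval.coe_toNNReal_eq_ofReal (p : I) : (toNNReal p : ℝ≥0∞) = ENNReal.ofReal p :=
  (ENNReal.ofReal_eq_coe_nnreal p.2.1).symm

namespace ProbabilityTheory

variable {X Ω : Type*} [MeasurableSpace X] [MeasurableSpace Ω]

lemma bernoulliMeasure_eq_ofReal_smul (x y : X) (p : I) :
    Ber(x, y, p) =
      ENNReal.ofReal p • Measure.dirac x + ENNReal.ofReal (1 - p) • Measure.dirac y := by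
  ext s
  simp only [bernoulliMeasure_def, Measure.add_apply, Measure.smul_apply, ENNReal.smul_def,
    smul_eq_mul, coe_toNNReal_eq_ofReal, coe_symm_eq]

lemma bernoulliMeasure_apply_eq_ofReal_mul (x y : X) (p : I) (s : Set X) :
    Ber(x, y, p) s =
      ENNReal.ofReal p * Measure.dirac x s + ENNReal.ofReal (1 - p) * Measure.dirac y s := by
  simp only [bernoulliMeasure_eq_ofReal_smul, Measure.add_apply, Measure.smul_apply, smul_eq_mul]

lemma integrable_coe_unitInterval (μ : Measure Ω) [IsFiniteMeasure μ] {p : Ω → I}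
    (hp : Measurable p) : Integrable (fun ω => (p ω : ℝ)) μ :=
  .of_mem_Icc 0 1 (measurable_subtype_coe.comp hp).aemeasurable (.of_forall fun ω => (p ω).2)

lemma integral_mem_unitInterval (μ : Measure Ω) [IsProbabilityMeasure μ] {p : Ω → I}
    (hp : Measurable p) : ∫ ω, (p ω : ℝ) ∂μ ∈ I := by
  refine ⟨integral_nonneg fun ω => (p ω).2.1, ?_⟩
  simpa using integral_mono (integrable_coe_unitInterval μ hp) (integrable_const 1)
    fun ω => (p ω).2.2

noncomputable def bernoulliKernel (x y : X) {p : Ω → I} (hp : Measurable p) : Kernel Ω X where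
  toFun ω := Ber(x, y, p ω)
  measurable' := Measure.measurable_of_measurable_coe _ fun s _ => by
    simp_rw [bernoulliMeasure_apply_eq_ofReal_mul]
    fun_prop

instance (x y : X) {p : Ω → I} (hp : Measurable p) : IsMarkovKernel (bernoulliKernel x y hp) :=
  ⟨fun _ => inferInstanceAs (IsProbabilityMeasure Ber(x, y, _))⟩

lemma bernoulliKernel_comp_measure (x y : X) {p : Ω → I} (hp : Measurable p) (μ : Measure Ω)
    [IsProbabilityMeasure μ] :
    bernoulliKernel x y hp ∘ₘ μ =
      Ber(x, y, ⟨∫ ω, (p ω : ℝ) ∂μ, integral_mem_unitInterval μ hp⟩) := by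
  ext s hs
  rw [Measure.bind_apply hs (Kernel.aemeasurable _), bernoulliMeasure_apply_eq_ofReal_mul]
  simp_rw [bernoulliKernel, Kernel.coe_mk, bernoulliMeasure_apply_eq_ofReal_mul]
  have hint := integrable_coe_unitInterval μ hp
  have h_mean : ENNReal.ofReal (∫ ω, (p ω : ℝ) ∂μ) = ∫⁻ ω, ENNReal.ofReal (p ω) ∂μ :=
    ofReal_integral_eq_lintegral_ofReal hint (.of_forall fun ω => (p ω).2.1)
  have h_mean_symm :
      ENNReal.ofReal (1 - ∫ ω, (p ω : ℝ) ∂μ) = ∫⁻ ω, ENNReal.ofReal (1 - p ω) ∂μ := by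
    rw [← ofReal_integral_eq_lintegral_ofReal (f := fun ω => 1 - (p ω : ℝ))
      ((integrable_const 1).sub hint) (.of_forall fun ω => sub_nonneg.2 (p ω).2.2),
      integral_sub (integrable_const 1) hint]
    simp
  rw [lintegral_add_left (by fun_prop), lintegral_mul_const _ (by fun_prop),
    lintegral_mul_const _ (by fun_prop), h_mean, h_mean_symm]

lemma bernoulliMeasure_eq_withDensity [MeasurableSingletonClass X] {x y : X} (hxy : x ≠ y)
    (p q : I) (hq0 : (q : ℝ) ≠ 0) (hq1 : (q : ℝ) ≠ 1) :
    Ber(x, y, p) = Ber(x, y, q).withDensity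
      (fun z => if z = x then ENNReal.ofReal (p / q) else ENNReal.ofReal ((1 - p) / (1 - q))) := by
  rw [bernoulliMeasure_eq_ofReal_smul, bernoulliMeasure_eq_ofReal_smul, withDensity_add_measure,
    withDensity_smul_measure, withDensity_smul_measure, dirac_withDensity, dirac_withDensity,
    if_pos rfl, if_neg hxy.symm, smul_smul, smul_smul, ← ENNReal.ofReal_mul q.2.1,
    ← ENNReal.ofReal_mul (sub_nonneg.2 q.2.2), mul_div_cancel₀ _ hq0,
    mul_div_cancel₀ _ (sub_ne_zero.2 hq1.symm)]

end ProbabilityTheory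

lemma klBernoulli_self (a : ℝ) : klBernoulli a a = 0 := by
  have hlog : ∀ t : ℝ, Real.log (t / t) = 0 := fun t => by
    rcases eq_or_ne t 0 with rfl | ht
    · simp
    · simp [div_self ht]
  rw [klBernoulli, if_neg (by rintro (⟨rfl, h⟩ | ⟨rfl, h⟩) <;> norm_num at h), hlog, hlog]
  simp

lemma klDiv_bernoulliMeasure {X : Type*} [MeasurableSpace X] [MeasurableSingletonClass X]
    {x y : X} (hxy : x ≠ y) (p q : I) :
    klDiv Ber(x, y, p) Ber(x, y, q) = klBernoulli p q := by
  rcases eq_or_ne p q with rfl | hpq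
  · rw [klDiv_self, klBernoulli_self]
  have hp : (p : ℝ) ≠ q := fun h => hpq (Subtype.ext h)
  by_cases hq : (q : ℝ) = 0 ∨ (q : ℝ) = 1
  · rcases hq with hq | hq
    · obtain rfl : q = 0 := Subtype.ext hq
      have hp0 : (0 : ℝ) < p := lt_of_le_of_ne p.2.1 (by simpa using hp.symm)
      have hnac : ¬ Ber(x, y, p) ≪ Ber(x, y, 0) := fun h => by
        have := h (s := {x}) (by simp [hxy.symm])
        simp [bernoulliMeasure_apply_eq_ofReal_mul, hxy] at this
        linarith
      rw [klDiv_of_not_ac hnac, klBernoulli, if_pos (by simp [hp0])]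
    · obtain rfl : q = 1 := Subtype.ext hq
      have hp1 : (p : ℝ) < 1 := lt_of_le_of_ne p.2.2 (by simpa using hp)
      have hnac : ¬ Ber(x, y, p) ≪ Ber(x, y, 1) := fun h => by
        have := h (s := {y}) (by simp [hxy])
        simp [bernoulliMeasure_apply_eq_ofReal_mul, hxy.symm] at this
        linarith
      rw [klDiv_of_not_ac hnac, klBernoulli, if_pos (by simp [hp1])]
  push Not at hq
  have hBer := bernoulliMeasure_eq_withDensity hxy p q hq.1 hq.2
  set f : X → ℝ≥0∞ := fun z =>
    if z = x then ENNReal.ofReal (p / q) else ENNReal.ofReal ((1 - p) / (1 - q))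
  have hf : Measurable f := .ite (measurableSet_singleton x) measurable_const measurable_const
  have hac : Ber(x, y, p) ≪ Ber(x, y, q) := hBer ▸ withDensity_absolutelyContinuous _ _
  have hllr : llr Ber(x, y, p) Ber(x, y, q) =ᵐ[Ber(x, y, p)] fun z => Real.log (f z).toReal := by
    have hrn : Ber(x, y, p).rnDeriv Ber(x, y, q) =ᵐ[Ber(x, y, q)] f := by
      rw [hBer]
      exact Measure.rnDeriv_withDensity _ hf
    filter_upwards [hac.ae_le hrn] with z hz
    simp only [llr_def, hz]
  rw [klDiv_of_ac_of_integrable hac (integrable_bernoulliMeasure _ _ _ _), integral_congr_ae hllr,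
    integral_bernoulliMeasure, klBernoulli, if_neg (by tauto)]
  simp [f, if_neg hxy.symm, ENNReal.toReal_ofReal (div_nonneg p.2.1 q.2.1),
    ENNReal.toReal_ofReal (div_nonneg (sub_nonneg.2 p.2.2) (sub_nonneg.2 q.2.2))]

lemma klBernoulli_integral_le_klDivergence {Ω : Type*} [MeasurableSpace Ω] (P Q : Measure Ω)
    [IsProbabilityMeasure P] [IsProbabilityMeasure Q] {Z : Ω → ℝ} (hZ : Measurable Z)
    (hZ01 : ∀ ω, Z ω ∈ Set.Icc (0 : ℝ) 1) :
    klBernoulli (∫ ω, Z ω ∂P) (∫ ω, Z ω ∂Q) ≤ klDivergence P Q := by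
  have hp : Measurable fun ω => (⟨Z ω, hZ01 ω⟩ : I) := hZ.subtype_mk
  calc klBernoulli (∫ ω, Z ω ∂P) (∫ ω, Z ω ∂Q)
      = klDiv (bernoulliKernel true false hp ∘ₘ P) (bernoulliKernel true false hp ∘ₘ Q) := by
        rw [bernoulliKernel_comp_measure, bernoulliKernel_comp_measure,
          klDiv_bernoulliMeasure (x := true) (y := false) (by decide)]
    _ ≤ klDiv P Q := klDiv_comp_right_le P Q _
    _ = klDivergence P Q := (klDivergence_eq_klDiv (by simp)).symm

theorem kl_data_processing_general {Ω : Type*} [MeasurableSpace Ω] (P Q : Measure Ω)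
    [IsProbabilityMeasure P] [IsProbabilityMeasure Q]
    (Z : Ω → ℝ) (hZmeas : Measurable Z) (hZ01 : ∀ ω, Z ω ∈ Set.Icc (0 : ℝ) 1) :
    klBernoulli (∫ ω, Z ω ∂P) (∫ ω, Z ω ∂Q) ≤ klDivergence P Q ∧
      ∀ E : Set Ω, MeasurableSet E →
        klBernoulli (P E).toReal ((Q E).toReal) ≤ klDivergence P Q := by
  refine ⟨klBernoulli_integral_le_klDivergence P Q hZmeas hZ01, fun E hE => ?_⟩
  have hE01 : ∀ ω, E.indicator 1 ω ∈ Set.Icc (0 : ℝ) 1 := fun ω => by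
    by_cases hω : ω ∈ E <;> simp [hω]
  simpa [integral_indicator_one hE, measureReal_def] using
    klBernoulli_integral_le_klDivergence P Q (measurable_one.indicator hE) hE01

theorem kl_data_processing {Ω : Type*} [MeasurableSpace Ω] (P Q : Measure Ω)
    [IsProbabilityMeasure P] [IsProbabilityMeasure Q] (hPQ : P ≪ Q)
    (Z : Ω → ℝ) (hZmeas : Measurable Z) (hZ01 : ∀ ω, Z ω ∈ Set.Icc (0 : ℝ) 1) :
    klBernoulli (∫ ω, Z ω ∂P) (∫ ω, Z ω ∂Q) ≤ klDivergence P Q ∧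
      ∀ E : Set Ω, MeasurableSet E →
        klBernoulli (P E).toReal ((Q E).toReal) ≤ klDivergence P Q :=
  kl_data_processing_general P Q Z hZmeas hZ01
end

section
/- Fix α ∈ (0,1) and ε_A, ε_B > 0. Let Δ_A ∈ ℝ^{n_x×n_x} and Δ_B ∈ ℝ^{n_x×n_u} satisfy ‖Δ_A‖₂ ≤ ε_A and ‖Δ_B‖₂ ≤ ε_B. Then for any matrices X ∈ ℂ^{n_x×n_x} and Y ∈ ℂ^{n_u×n_x}, ‖Δ_A X + Δ_B Y‖₂ ≤ ‖ [ (ε_A/√α)·X ; (ε_B/√(1−α))·Y ] ‖₂, the matrix on the right being the (n_x+n_u)×n_x vertical block stacking. Consequently, for any functions Φ_x : S¹ → ℂ^{n_x×n_x} and Φ_u : S¹ → ℂ^{n_u×n_x} on the unit circle, sup_{z∈S¹} ‖Δ_A Φ_x(z) + Δ_B Φ_u(z)‖₂ ≤ sup_{z∈S¹} ‖ [ (ε_A/√α)·Φ_x(z) ; (ε_B/√(1−α))·Φ_u(z) ] ‖₂. -/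
/-!
Writing `p = X v` and `q = Y v`, the left-hand side sends `v` to `Δ_A p + Δ_B q`, of norm at most
`ε_A ‖p‖ + ε_B ‖q‖`, while the stacked matrix sends `v` to a vector of squared norm
`ε_A² ‖p‖² / α + ε_B² ‖q‖² / (1 - α)`. The two are compared by the weighted Cauchy–Schwarz
inequality `(a + b)² ≤ a² / α + b² / (1 - α)`. A real matrix acting on complex
vectors has no larger operator norm, because it maps the real and imaginary parts separately and
their squared norms add.
-/

/-- Spectral (ℓ²→ℓ² operator) norm of a real matrix. -/
noncomputable def specNormR {m n : Type*} [Fintype m] [Fintype n] [DecidableEq n]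
    (M : Matrix m n ℝ) : ℝ :=
  ‖LinearMap.toContinuousLinearMap (Matrix.toEuclideanLin M)‖

/-- Spectral (ℓ²→ℓ² operator) norm of a complex matrix. -/
noncomputable def specNormC {m n : Type*} [Fintype m] [Fintype n] [DecidableEq n]
    (M : Matrix m n ℂ) : ℝ :=
  ‖LinearMap.toContinuousLinearMap (Matrix.toEuclideanLin M)‖

open Matrix WithLp

lemma add_sq_le_sq_div_add_sq_div {α : ℝ} (hα : α ∈ Set.Ioo 0 1) (a b : ℝ) :
    (a + b) ^ 2 ≤ a ^ 2 / α + b ^ 2 / (1 - α) := by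
  obtain ⟨hα₀, hα₁⟩ := hα
  have hβ₀ : 0 < 1 - α := by linarith
  rw [div_add_div _ _ hα₀.ne' hβ₀.ne', le_div_iff₀ (by positivity)]
  nlinarith [sq_nonneg ((1 - α) * a - α * b)]

section EuclideanSpace

variable {m n : Type*} [Fintype n]

noncomputable def euclideanRe (w : EuclideanSpace ℂ n) : EuclideanSpace ℝ n :=
  toLp 2 fun i => (w i).re

noncomputable def euclideanIm (w : EuclideanSpace ℂ n) : EuclideanSpace ℝ n :=
  toLp 2 fun i => (w i).im

lemma norm_sq_eq_norm_sq_euclideanRe_add_norm_sq_euclideanIm (w : EuclideanSpace ℂ n) :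
    ‖w‖ ^ 2 = ‖euclideanRe w‖ ^ 2 + ‖euclideanIm w‖ ^ 2 := by
  simp only [EuclideanSpace.norm_sq_eq, euclideanRe, euclideanIm, ← Finset.sum_add_distrib]
  refine Finset.sum_congr rfl fun i _ => ?_
  rw [Complex.sq_norm, Complex.normSq_apply, Real.norm_eq_abs, Real.norm_eq_abs, sq_abs, sq_abs]
  ring

variable [DecidableEq n]

lemma euclideanRe_toEuclideanLin_map_ofReal (M : Matrix m n ℝ) (v : EuclideanSpace ℂ n) :
    euclideanRe (toEuclideanLin (M.map Complex.ofReal) v) = toEuclideanLin M (euclideanRe v) := by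
  ext i
  simp [euclideanRe, toLpLin_apply, mulVec, dotProduct]

lemma euclideanIm_toEuclideanLin_map_ofReal (M : Matrix m n ℝ) (v : EuclideanSpace ℂ n) :
    euclideanIm (toEuclideanLin (M.map Complex.ofReal) v) = toEuclideanLin M (euclideanIm v) := by
  ext i
  simp [euclideanIm, toLpLin_apply, mulVec, dotProduct]

variable [Fintype m]

lemma norm_toEuclideanLin_le_specNormR (M : Matrix m n ℝ) (v : EuclideanSpace ℝ n) :
    ‖toEuclideanLin M v‖ ≤ specNormR M * ‖v‖ :=
  (LinearMap.toContinuousLinearMap (toEuclideanLin M)).le_opNorm v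

lemma norm_toEuclideanLin_le_specNormC (M : Matrix m n ℂ) (v : EuclideanSpace ℂ n) :
    ‖toEuclideanLin M v‖ ≤ specNormC M * ‖v‖ :=
  (LinearMap.toContinuousLinearMap (toEuclideanLin M)).le_opNorm v

lemma specNormC_le_of_norm_toEuclideanLin_le {k : Type*} [Fintype k] {M : Matrix m n ℂ}
    {N : Matrix k n ℂ} (h : ∀ v, ‖toEuclideanLin M v‖ ≤ ‖toEuclideanLin N v‖) :
    specNormC M ≤ specNormC N :=
  ContinuousLinearMap.opNorm_le_bound _ (norm_nonneg _) fun v =>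
    (h v).trans (norm_toEuclideanLin_le_specNormC N v)

lemma norm_toEuclideanLin_map_ofReal_le (M : Matrix m n ℝ) (v : EuclideanSpace ℂ n) :
    ‖toEuclideanLin (M.map Complex.ofReal) v‖ ≤ specNormR M * ‖v‖ := by
  have hM : 0 ≤ specNormR M := norm_nonneg _
  have bound (x : EuclideanSpace ℝ n) : ‖toEuclideanLin M x‖ ^ 2 ≤ specNormR M ^ 2 * ‖x‖ ^ 2 := by
    rw [← mul_pow]
    exact pow_le_pow_left₀ (norm_nonneg _) (norm_toEuclideanLin_le_specNormR M x) 2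
  refine (sq_le_sq₀ (norm_nonneg _) (by positivity)).mp ?_
  calc ‖toEuclideanLin (M.map Complex.ofReal) v‖ ^ 2
      = ‖toEuclideanLin M (euclideanRe v)‖ ^ 2 + ‖toEuclideanLin M (euclideanIm v)‖ ^ 2 := by
        rw [norm_sq_eq_norm_sq_euclideanRe_add_norm_sq_euclideanIm,
          euclideanRe_toEuclideanLin_map_ofReal, euclideanIm_toEuclideanLin_map_ofReal]
    _ ≤ specNormR M ^ 2 * ‖euclideanRe v‖ ^ 2 + specNormR M ^ 2 * ‖euclideanIm v‖ ^ 2 :=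
        add_le_add (bound _) (bound _)
    _ = (specNormR M * ‖v‖) ^ 2 := by
        rw [mul_pow, norm_sq_eq_norm_sq_euclideanRe_add_norm_sq_euclideanIm, mul_add]

end EuclideanSpace

lemma norm_sq_toEuclideanLin_fromRows {𝕜 : Type*} [RCLike 𝕜] {m₁ m₂ n : Type*} [Fintype m₁]
    [Fintype m₂] [Fintype n] [DecidableEq n] (A : Matrix m₁ n 𝕜) (B : Matrix m₂ n 𝕜)
    (v : EuclideanSpace 𝕜 n) :
    ‖toEuclideanLin (fromRows A B) v‖ ^ 2 = ‖toEuclideanLin A v‖ ^ 2 + ‖toEuclideanLin B v‖ ^ 2 := by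
  simp only [EuclideanSpace.norm_sq_eq, toLpLin_apply, fromRows_mulVec, Fintype.sum_sum_type,
    Sum.elim_inl, Sum.elim_inr]

lemma specNormC_mul_add_mul_le_specNormC_fromRows {l m k n : Type*} [Fintype l] [Fintype m]
    [Fintype k] [Fintype n] [DecidableEq m] [DecidableEq k] [DecidableEq n]
    {α εA εB : ℝ} (hα : α ∈ Set.Ioo 0 1) {ΔA : Matrix l m ℝ} {ΔB : Matrix l k ℝ}
    (hΔA : specNormR ΔA ≤ εA) (hΔB : specNormR ΔB ≤ εB) (X : Matrix m n ℂ) (Y : Matrix k n ℂ) :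
    specNormC (ΔA.map Complex.ofReal * X + ΔB.map Complex.ofReal * Y) ≤
      specNormC (fromRows (((εA / Real.sqrt α : ℝ) : ℂ) • X)
        (((εB / Real.sqrt (1 - α) : ℝ) : ℂ) • Y)) := by
  refine specNormC_le_of_norm_toEuclideanLin_le fun v => ?_
  set p := toEuclideanLin X v
  set q := toEuclideanLin Y v
  have hεA : 0 ≤ εA := (norm_nonneg _).trans hΔA
  have hεB : 0 ≤ εB := (norm_nonneg _).trans hΔB
  have triangle : ‖toEuclideanLin (ΔA.map Complex.ofReal * X + ΔB.map Complex.ofReal * Y) v‖ ≤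
      εA * ‖p‖ + εB * ‖q‖ := by
    rw [map_add, LinearMap.add_apply, toLpLin_mul_same, toLpLin_mul_same, LinearMap.comp_apply,
      LinearMap.comp_apply]
    refine (norm_add_le _ _).trans (add_le_add ?_ ?_)
    · exact (norm_toEuclideanLin_map_ofReal_le ΔA p).trans
        (mul_le_mul_of_nonneg_right hΔA (norm_nonneg p))
    · exact (norm_toEuclideanLin_map_ofReal_le ΔB q).trans
        (mul_le_mul_of_nonneg_right hΔB (norm_nonneg q))
  have stacked : ‖toEuclideanLin (fromRows (((εA / Real.sqrt α : ℝ) : ℂ) • X)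
      (((εB / Real.sqrt (1 - α) : ℝ) : ℂ) • Y)) v‖ ^ 2 =
      (εA * ‖p‖) ^ 2 / α + (εB * ‖q‖) ^ 2 / (1 - α) := by
    simp only [norm_sq_toEuclideanLin_fromRows, map_smul, LinearMap.smul_apply, norm_smul,
      Complex.norm_real, Real.norm_eq_abs, mul_pow, sq_abs, div_pow]
    rw [Real.sq_sqrt hα.1.le, Real.sq_sqrt (sub_nonneg.mpr hα.2.le)]
    ring
  refine triangle.trans ((sq_le_sq₀ (by positivity) (norm_nonneg _)).mp ?_)
  exact stacked ▸ add_sq_le_sq_div_add_sq_div hα _ _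

theorem robust_lqr_hinf_bound_general (nx nu : ℕ) (α εA εB : ℝ)
    (hα : α ∈ Set.Ioo (0 : ℝ) 1)
    (ΔA : Matrix (Fin nx) (Fin nx) ℝ) (ΔB : Matrix (Fin nx) (Fin nu) ℝ)
    (hΔA : specNormR ΔA ≤ εA) (hΔB : specNormR ΔB ≤ εB) :
    (∀ (X : Matrix (Fin nx) (Fin nx) ℂ) (Y : Matrix (Fin nu) (Fin nx) ℂ),
      specNormC (ΔA.map Complex.ofReal * X + ΔB.map Complex.ofReal * Y) ≤
        specNormC (Matrix.fromRows
          ((((εA / Real.sqrt α : ℝ) : ℂ)) • X)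
          ((((εB / Real.sqrt (1 - α) : ℝ) : ℂ)) • Y))) ∧
    (∀ (Φx : Circle → Matrix (Fin nx) (Fin nx) ℂ) (Φu : Circle → Matrix (Fin nu) (Fin nx) ℂ),
      (⨆ z : Circle, ENNReal.ofReal (specNormC
          (ΔA.map Complex.ofReal * Φx z + ΔB.map Complex.ofReal * Φu z))) ≤
        ⨆ z : Circle, ENNReal.ofReal (specNormC (Matrix.fromRows
          ((((εA / Real.sqrt α : ℝ) : ℂ)) • Φx z)
          ((((εB / Real.sqrt (1 - α) : ℝ) : ℂ)) • Φu z)))) := by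
  have pointwise (X : Matrix (Fin nx) (Fin nx) ℂ) (Y : Matrix (Fin nu) (Fin nx) ℂ) :=
    specNormC_mul_add_mul_le_specNormC_fromRows hα hΔA hΔB X Y
  exact ⟨pointwise, fun Φx Φu =>
    iSup_mono fun z => ENNReal.ofReal_le_ofReal (pointwise (Φx z) (Φu z))⟩

theorem robust_lqr_hinf_bound (nx nu : ℕ) (α εA εB : ℝ)
    (hα : α ∈ Set.Ioo (0 : ℝ) 1) (hεA : 0 < εA) (hεB : 0 < εB)
    (ΔA : Matrix (Fin nx) (Fin nx) ℝ) (ΔB : Matrix (Fin nx) (Fin nu) ℝ)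
    (hΔA : specNormR ΔA ≤ εA) (hΔB : specNormR ΔB ≤ εB) :
    (∀ (X : Matrix (Fin nx) (Fin nx) ℂ) (Y : Matrix (Fin nu) (Fin nx) ℂ),
      specNormC (ΔA.map Complex.ofReal * X + ΔB.map Complex.ofReal * Y) ≤
        specNormC (Matrix.fromRows
          ((((εA / Real.sqrt α : ℝ) : ℂ)) • X)
          ((((εB / Real.sqrt (1 - α) : ℝ) : ℂ)) • Y))) ∧
    (∀ (Φx : Circle → Matrix (Fin nx) (Fin nx) ℂ) (Φu : Circle → Matrix (Fin nu) (Fin nx) ℂ),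
      (⨆ z : Circle, ENNReal.ofReal (specNormC
          (ΔA.map Complex.ofReal * Φx z + ΔB.map Complex.ofReal * Φu z))) ≤
        ⨆ z : Circle, ENNReal.ofReal (specNormC (Matrix.fromRows
          ((((εA / Real.sqrt α : ℝ) : ℂ)) • Φx z)
          ((((εB / Real.sqrt (1 - α) : ℝ) : ℂ)) • Φu z)))) :=
  robust_lqr_hinf_bound_general nx nu α εA εB hα ΔA ΔB hΔA hΔB
end

section
/- Let σ > 0, let π : ℝ^p → ℝ^d be continuously differentiable, and let f : ℝ^d → ℝ be bounded and measurable. Define g(θ) := E_{η∼N(0,σ²I_d)}[ f(π(θ) + η) ]. Then g is differentiable on ℝ^p and its gradient admits the score-function (likelihood-ratio) representation ∇g(θ) = (1/σ²) · (Dπ(θ))ᵀ · E_{η∼N(0,σ²I_d)}[ f(π(θ) + η) · η ], where Dπ(θ) ∈ ℝ^{d×p} is the Jacobian of π at θ. -/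
/-!
STATEMENT 8 (score-function / REINFORCE gradient identity):
For `g(θ) = E_{η ∼ N(0,σ²I_d)}[f(π(θ)+η)]` with `π` continuously differentiable and
`f` bounded measurable, `g` is differentiable and
`∇g(θ) = (1/σ²)·(Dπ(θ))ᵀ·E[f(π(θ)+η)·η]`, stated here via directional derivatives.
-/

open MeasureTheory ProbabilityTheory
open scoped ENNReal NNReal

/-- The centered Gaussian measure `N(0, σ² I_d)` on `ℝ^d` (i.i.d. coordinates). -/
noncomputable def gaussPi (d : ℕ) (σ : ℝ) : Measure (Fin d → ℝ) :=
  Measure.pi fun _ => gaussianReal 0 (Real.toNNReal (σ ^ 2))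

/-!
Writing `u = x + η`, the smoothed function `x ↦ E[f(x + η)]` is the convolution
`∫ φ(u - x) f(u) du` of `f` with the Gaussian density `φ`, so all the dependence on `x` sits in
the smooth kernel. Differentiating under the integral sign gives
`∇ₓ φ(u - x) = σ⁻² φ(u - x) (u - x)`, which is `σ⁻² E[f(x + η) η]` after substituting back.
Domination holds because `f` is bounded and, for `‖x - x₀‖ ≤ 1` and `z = u - x₀`,
`φ(u - x) ∑ᵢ |uᵢ - xᵢ| ≤ const · exp (∑ᵢ (|zᵢ| - zᵢ² / (4σ²)))`, which is integrable.
The chain rule through `π` finishes the proof.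
-/

namespace MeasureTheory

theorem lintegral_fin_nat_prod_eq_prod {n : ℕ} {E : Type*} [MeasurableSpace E]
    {μ : Fin n → Measure E} [∀ i, SigmaFinite (μ i)]
    {f : Fin n → E → ℝ≥0∞} (hf : ∀ i, Measurable (f i)) :
    ∫⁻ x : Fin n → E, ∏ i, f i (x i) ∂(Measure.pi μ) = ∏ i, ∫⁻ x, f i x ∂(μ i) := by
  induction n with
  | zero => simp
  | succ n ih =>
    rw [← ((measurePreserving_piFinSuccAbove μ 0).symm).lintegral_comp_emb
      (MeasurableEquiv.measurableEmbedding _)]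
    simp_rw [MeasurableEquiv.piFinSuccAbove_symm_apply, Fin.insertNthEquiv,
      Fin.prod_univ_succ, Fin.insertNth_zero, Equiv.coe_fn_mk, Fin.cons_succ,
      Fin.zero_succAbove, cast_eq, Fin.cons_zero]
    rw [lintegral_prod_mul (f := f 0) (g := fun y : Fin n → E => ∏ i, f i.succ (y i))
      (hf 0).aemeasurable
      (Finset.measurable_prod _ fun i _ => (hf i.succ).comp (measurable_pi_apply i)).aemeasurable,
      ih fun i => hf i.succ]

theorem lintegral_fintype_prod_eq_prod {ι : Type*} [Fintype ι] {E : Type*} [MeasurableSpace E]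
    {μ : ι → Measure E} [∀ i, SigmaFinite (μ i)]
    {f : ι → E → ℝ≥0∞} (hf : ∀ i, Measurable (f i)) :
    ∫⁻ x : ι → E, ∏ i, f i (x i) ∂(Measure.pi μ) = ∏ i, ∫⁻ x, f i x ∂(μ i) := by
  let e := (Fintype.equivFin ι).symm
  rw [← (measurePreserving_piCongrLeft _ e).lintegral_comp_emb
    (MeasurableEquiv.measurableEmbedding _)]
  simp_rw [← e.prod_comp, MeasurableEquiv.coe_piCongrLeft, Equiv.piCongrLeft_apply_apply]
  exact lintegral_fin_nat_prod_eq_prod fun i => hf (e i)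

theorem Measure.pi_withDensity {ι : Type*} [Fintype ι] {E : Type*} [MeasurableSpace E]
    {μ : ι → Measure E} [∀ i, SigmaFinite (μ i)]
    {f : ι → E → ℝ≥0∞} (hf : ∀ i, Measurable (f i))
    [∀ i, SigmaFinite ((μ i).withDensity (f i))] :
    Measure.pi (fun i => (μ i).withDensity (f i)) =
      (Measure.pi μ).withDensity (fun x => ∏ i, f i (x i)) := by
  refine Measure.pi_eq fun s hs => ?_
  classical
  have hbox : (Set.univ.pi s).indicator (fun x => ∏ i, f i (x i)) =
      fun x => ∏ i, (s i).indicator (f i) (x i) := by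
    ext x
    simp only [Set.indicator, Set.mem_univ_pi, Finset.prod_ite_zero, Finset.mem_univ, true_implies]
  rw [withDensity_apply _ (MeasurableSet.univ_pi hs),
    ← lintegral_indicator (MeasurableSet.univ_pi hs), hbox,
    lintegral_fintype_prod_eq_prod fun i => (hf i).indicator (hs i)]
  simp_rw [lintegral_indicator (hs _), withDensity_apply _ (hs _)]

end MeasureTheory

section

open Real

variable {ι : Type*} [Fintype ι]

lemma integrable_exp_mul_abs_sub_mul_sq {b : ℝ} (hb : 0 < b) (a : ℝ) :
    Integrable fun t : ℝ => exp (a * |t| - b * t ^ 2) := by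
  refine ((integrable_exp_neg_mul_sq (half_pos hb)).const_mul (exp (a ^ 2 / (2 * b)))).mono'
    (by fun_prop : Continuous _).aestronglyMeasurable (ae_of_all _ fun t => ?_)
  rw [norm_of_nonneg (exp_pos _).le, ← exp_add, exp_le_exp, ← sq_abs t]
  have hsq : a ^ 2 / (2 * b) + -(b / 2) * |t| ^ 2 - (a * |t| - b * |t| ^ 2) =
      (a - b * |t|) ^ 2 / (2 * b) := by
    field_simp
    ring
  linarith [div_nonneg (sq_nonneg (a - b * |t|)) (by positivity : (0 : ℝ) ≤ 2 * b)]

lemma integrable_exp_sum_mul_abs_sub_mul_sq {b : ℝ} (hb : 0 < b) (a : ℝ) :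
    Integrable fun z : ι → ℝ => exp (∑ i, (a * |z i| - b * z i ^ 2)) := by
  simp_rw [exp_sum]
  exact Integrable.fintype_prod (f := fun _ t => exp (a * |t| - b * t ^ 2))
    fun _ => integrable_exp_mul_abs_sub_mul_sq hb a

lemma neg_sq_div_add_abs_le {V t s : ℝ} (hV : 0 < V) (hs : |s| ≤ 1) :
    -(t - s) ^ 2 / (2 * V) + |t - s| ≤ (|t| - (4 * V)⁻¹ * t ^ 2) + (1 + (2 * V)⁻¹) := by
  have hsq : t ^ 2 / 2 - 1 ≤ (t - s) ^ 2 := by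
    nlinarith [sq_nonneg (t - 2 * s), sq_abs s, abs_nonneg s]
  have h1 : (2 * V)⁻¹ * (t ^ 2 / 2 - 1) ≤ (2 * V)⁻¹ * (t - s) ^ 2 :=
    mul_le_mul_of_nonneg_left hsq (by positivity)
  have h2 : |t - s| ≤ |t| + 1 := (abs_sub _ _).trans (by linarith)
  have e1 : -(t - s) ^ 2 / (2 * V) = -((2 * V)⁻¹ * (t - s) ^ 2) := by ring
  have e2 : (2 * V)⁻¹ * (t ^ 2 / 2 - 1) = (4 * V)⁻¹ * t ^ 2 - (2 * V)⁻¹ := by ring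
  linarith

noncomputable def dotProductCLM (ι : Type*) [Fintype ι] :
    (ι → ℝ) →L[ℝ] (ι → ℝ) →L[ℝ] ℝ :=
  ∑ i, (ContinuousLinearMap.proj i).smulRight
    (ContinuousLinearMap.proj (R := ℝ) (φ := fun _ : ι => ℝ) i)

@[simp]
lemma dotProductCLM_apply (z w : ι → ℝ) : dotProductCLM ι z w = z ⬝ᵥ w := by
  simp [dotProductCLM, dotProduct]

lemma norm_dotProductCLM_le (z : ι → ℝ) : ‖dotProductCLM ι z‖ ≤ ∑ i, |z i| := by
  refine ContinuousLinearMap.opNorm_le_bound _ (by positivity) fun w => ?_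
  rw [dotProductCLM_apply, dotProduct, Finset.sum_mul]
  refine (Finset.abs_sum_le_sum_abs _ _).trans (Finset.sum_le_sum fun i _ => ?_)
  rw [abs_mul]
  exact mul_le_mul_of_nonneg_left (norm_le_pi_norm w i) (abs_nonneg _)

end

namespace ProbabilityTheory

open Real

variable {ι : Type*} [Fintype ι]

noncomputable def gaussianPiPDFReal (ι : Type*) [Fintype ι] (v : ℝ≥0) (z : ι → ℝ) : ℝ :=
  (√(2 * π * v))⁻¹ ^ Fintype.card ι * exp (-(∑ i, z i ^ 2) / (2 * v))

lemma gaussianPiPDFReal_nonneg (v : ℝ≥0) (z : ι → ℝ) : 0 ≤ gaussianPiPDFReal ι v z := by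
  unfold gaussianPiPDFReal; positivity

lemma continuous_gaussianPiPDFReal (v : ℝ≥0) : Continuous (gaussianPiPDFReal ι v) := by
  unfold gaussianPiPDFReal; fun_prop

lemma gaussianPiPDFReal_eq_prod (v : ℝ≥0) (z : ι → ℝ) :
    gaussianPiPDFReal ι v z = ∏ i, gaussianPDFReal 0 v (z i) := by
  simp only [gaussianPDFReal, sub_zero, Finset.prod_mul_distrib, Finset.prod_const,
    Finset.card_univ, ← exp_sum, ← Finset.sum_div, Finset.sum_neg_distrib, gaussianPiPDFReal]

lemma pi_gaussianReal_eq_withDensity {v : ℝ≥0} (hv : v ≠ 0) :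
    Measure.pi (fun _ : ι => gaussianReal 0 v) =
      volume.withDensity (fun z => ENNReal.ofReal (gaussianPiPDFReal ι v z)) := by
  simp_rw [gaussianReal_of_var_ne_zero 0 hv, gaussianPDF_def]
  rw [Measure.pi_withDensity fun _ => (measurable_gaussianPDFReal 0 v).ennreal_ofReal, volume_pi]
  congr with z
  rw [gaussianPiPDFReal_eq_prod,
    ENNReal.ofReal_prod_of_nonneg fun i _ => gaussianPDFReal_nonneg 0 v _]

theorem integral_pi_gaussianReal_add {v : ℝ≥0} (hv : v ≠ 0) (G : (ι → ℝ) → ℝ) (x : ι → ℝ) :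
    ∫ η, G (x + η) ∂Measure.pi (fun _ : ι => gaussianReal 0 v) =
      ∫ u, gaussianPiPDFReal ι v (u - x) * G u := by
  rw [pi_gaussianReal_eq_withDensity hv, integral_withDensity_eq_integral_toReal_smul
    (continuous_gaussianPiPDFReal v).measurable.ennreal_ofReal
    (ae_of_all _ fun _ => ENNReal.ofReal_lt_top),
    ← integral_add_left_eq_self (fun u => gaussianPiPDFReal ι v (u - x) * G u) x]
  simp [ENNReal.toReal_ofReal (gaussianPiPDFReal_nonneg v _)]

lemma integrable_gaussianPiPDFReal (v : ℝ≥0) : Integrable (gaussianPiPDFReal ι v) := by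
  simp_rw [funext (gaussianPiPDFReal_eq_prod v)]
  exact Integrable.fintype_prod fun _ => integrable_gaussianPDFReal 0 v

lemma hasFDerivAt_gaussianPiPDFReal_sub (v : ℝ≥0) (u x : ι → ℝ) :
    HasFDerivAt (fun x => gaussianPiPDFReal ι v (u - x))
      (((v : ℝ)⁻¹ * gaussianPiPDFReal ι v (u - x)) • dotProductCLM ι (u - x)) x := by
  have hsq (i : ι) : HasFDerivAt (fun x : ι → ℝ => (u i - x i) ^ 2)
      (-(2 * (u i - x i)) • ContinuousLinearMap.proj (R := ℝ) (φ := fun _ : ι => ℝ) i) x := by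
    refine (((hasFDerivAt_const (u i) x).sub
      (ContinuousLinearMap.proj (R := ℝ) (φ := fun _ : ι => ℝ) i).hasFDerivAt).pow
        2).congr_fderiv ?_
    ext w
    simp
  have hform : (fun x => gaussianPiPDFReal ι v (u - x)) = fun x =>
      (√(2 * π * v))⁻¹ ^ Fintype.card ι * exp (-(2 * v : ℝ)⁻¹ * ∑ i, (u i - x i) ^ 2) := by
    ext x
    rw [gaussianPiPDFReal, neg_div, div_eq_inv_mul, neg_mul]
    simp
  rw [hform]
  refine (((HasFDerivAt.fun_sum fun i _ => hsq i).const_mul (-(2 * v : ℝ)⁻¹)).exp.const_mul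
    ((√(2 * π * v))⁻¹ ^ Fintype.card ι)).congr_fderiv ?_
  ext w
  simp only [congrFun hform x, smul_apply, dotProductCLM_apply, dotProduct, FunLike.coe_sum,
    Finset.sum_apply, ContinuousLinearMap.proj_apply, smul_eq_mul, Finset.mul_sum, Pi.sub_apply]
  exact Finset.sum_congr rfl fun i _ => by ring

lemma norm_fderiv_gaussianPiPDFReal_sub_le {v : ℝ≥0} (hv : v ≠ 0) {x x₀ : ι → ℝ}
    (hx : dist x x₀ ≤ 1) (u : ι → ℝ) :
    ‖((v : ℝ)⁻¹ * gaussianPiPDFReal ι v (u - x)) • dotProductCLM ι (u - x)‖ ≤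
      (v : ℝ)⁻¹ * (√(2 * π * v))⁻¹ ^ Fintype.card ι *
        exp (Fintype.card ι * (1 + (2 * (v : ℝ))⁻¹)) *
        exp (∑ i, (|(u - x₀) i| - (4 * (v : ℝ))⁻¹ * (u - x₀) i ^ 2)) := by
  have hcoord (i : ι) : -(u i - x i) ^ 2 / (2 * v) + |u i - x i| ≤
      (|(u - x₀) i| - (4 * (v : ℝ))⁻¹ * (u - x₀) i ^ 2) + (1 + (2 * (v : ℝ))⁻¹) := by
    have hs : |x i - x₀ i| ≤ 1 := by
      simpa [Real.dist_eq] using (dist_le_pi_dist x x₀ i).trans hx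
    simpa using neg_sq_div_add_abs_le (t := u i - x₀ i)
      (NNReal.coe_pos.2 (pos_iff_ne_zero.2 hv)) hs
  have hφ := gaussianPiPDFReal_nonneg v (u - x)
  rw [norm_smul, Real.norm_of_nonneg (by positivity), mul_assoc, mul_assoc, mul_assoc]
  refine mul_le_mul_of_nonneg_left ?_ (by positivity)
  calc gaussianPiPDFReal ι v (u - x) * ‖dotProductCLM ι (u - x)‖
      ≤ gaussianPiPDFReal ι v (u - x) * exp (∑ i, |u i - x i|) := by
        refine mul_le_mul_of_nonneg_left ((norm_dotProductCLM_le _).trans ?_) hφ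
        simp only [Pi.sub_apply]
        linarith [add_one_le_exp (∑ i, |u i - x i|)]
    _ = (√(2 * π * v))⁻¹ ^ Fintype.card ι *
          exp (∑ i, (-(u i - x i) ^ 2 / (2 * v) + |u i - x i|)) := by
        rw [gaussianPiPDFReal, mul_assoc, ← exp_add, Finset.sum_add_distrib, ← Finset.sum_div,
          Finset.sum_neg_distrib]
        rfl
    _ ≤ (√(2 * π * v))⁻¹ ^ Fintype.card ι * exp (∑ i,
          ((|(u - x₀) i| - (4 * (v : ℝ))⁻¹ * (u - x₀) i ^ 2) + (1 + (2 * (v : ℝ))⁻¹))) := by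
        gcongr _ * exp ?_
        exact Finset.sum_le_sum fun i _ => hcoord i
    _ = _ := by
        rw [Finset.sum_add_distrib, exp_add, Finset.sum_const, Finset.card_univ, nsmul_eq_mul]
        ring

theorem integral_smul_fderiv_gaussianPiPDFReal_sub {v : ℝ≥0} (hv : v ≠ 0) {g : (ι → ℝ) → ℝ}
    {x₀ : ι → ℝ} (hint : Integrable fun u =>
      g u • (((v : ℝ)⁻¹ * gaussianPiPDFReal ι v (u - x₀)) • dotProductCLM ι (u - x₀))) :
    ∫ u, g u • (((v : ℝ)⁻¹ * gaussianPiPDFReal ι v (u - x₀)) • dotProductCLM ι (u - x₀)) =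
      (v : ℝ)⁻¹ • dotProductCLM ι
        (fun i => ∫ η, g (x₀ + η) * η i ∂Measure.pi fun _ : ι => gaussianReal 0 v) := by
  classical
  refine ContinuousLinearMap.coe_injective (LinearMap.pi_ext fun j t => ?_)
  have hj : ∫ η, g (x₀ + η) * η j ∂Measure.pi (fun _ : ι => gaussianReal 0 v) =
      ∫ u, gaussianPiPDFReal ι v (u - x₀) * (g u * (u j - x₀ j)) := by
    simpa using integral_pi_gaussianReal_add hv (fun u => g u * (u j - x₀ j)) x₀
  simp only [ContinuousLinearMap.coe_coe, ContinuousLinearMap.integral_apply hint, smul_apply,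
    dotProductCLM_apply, dotProduct_single, smul_eq_mul, Pi.sub_apply, hj]
  rw [← integral_mul_const, ← integral_const_mul]
  congr 1 with u
  ring

theorem hasFDerivAt_integral_pi_gaussianReal_add {v : ℝ≥0} (hv : v ≠ 0) {f : (ι → ℝ) → ℝ}
    (hf : Measurable f) {C : ℝ} (hfC : ∀ y, |f y| ≤ C) (x₀ : ι → ℝ) :
    HasFDerivAt (fun x => ∫ η, f (x + η) ∂Measure.pi fun _ : ι => gaussianReal 0 v)
      ((v : ℝ)⁻¹ • dotProductCLM ι
        (fun i => ∫ η, f (x₀ + η) * η i ∂Measure.pi fun _ : ι => gaussianReal 0 v)) x₀ := by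
  set φ := gaussianPiPDFReal ι v
  set F' : (ι → ℝ) → (ι → ℝ) → (ι → ℝ) →L[ℝ] ℝ :=
    fun x u => f u • (((v : ℝ)⁻¹ * φ (u - x)) • dotProductCLM ι (u - x))
  set bound : (ι → ℝ) → ℝ := fun u => C * ((v : ℝ)⁻¹ * (√(2 * π * v))⁻¹ ^ Fintype.card ι *
    exp (Fintype.card ι * (1 + (2 * (v : ℝ))⁻¹)) *
    exp (∑ i, (|(u - x₀) i| - (4 * (v : ℝ))⁻¹ * (u - x₀) i ^ 2)))
  have hφ : Continuous φ := continuous_gaussianPiPDFReal v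
  have hF'_le (u : ι → ℝ) (x : ι → ℝ) (hx : x ∈ Metric.ball x₀ 1) : ‖F' x u‖ ≤ bound u := by
    rw [norm_smul, Real.norm_eq_abs]
    exact mul_le_mul (hfC u) (norm_fderiv_gaussianPiPDFReal_sub_le hv (Metric.mem_ball.1 hx).le u)
      (norm_nonneg _) ((abs_nonneg _).trans (hfC u))
  have hF'_meas : AEStronglyMeasurable (F' x₀) :=
    hf.aestronglyMeasurable.smul (by fun_prop : Continuous fun u =>
      ((v : ℝ)⁻¹ * φ (u - x₀)) • dotProductCLM ι (u - x₀)).aestronglyMeasurable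
  have hbound : Integrable bound := by
    have h := integrable_exp_sum_mul_abs_sub_mul_sq (ι := ι) (b := (4 * (v : ℝ))⁻¹)
      (by positivity) 1
    simp only [one_mul] at h
    exact ((h.comp_sub_right x₀).const_mul _).const_mul _
  have hderiv : HasFDerivAt (fun x => ∫ u, φ (u - x) * f u) (∫ u, F' x₀ u) x₀ :=
    hasFDerivAt_integral_of_dominated_of_fderiv_le (Metric.ball_mem_nhds x₀ one_pos)
      (.of_forall fun x => ((hφ.comp (continuous_id.sub continuous_const)).aestronglyMeasurable.mul
        hf.aestronglyMeasurable))
      (((integrable_gaussianPiPDFReal v).comp_sub_right x₀).mul_bdd hf.aestronglyMeasurable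
        (ae_of_all _ hfC))
      hF'_meas (ae_of_all _ hF'_le) hbound
      (ae_of_all _ fun u x _ => (hasFDerivAt_gaussianPiPDFReal_sub v u x).mul_const (f u))
  rw [← integral_smul_fderiv_gaussianPiPDFReal_sub hv
    (hbound.mono' hF'_meas (ae_of_all _ fun u => hF'_le u x₀ (Metric.mem_ball_self one_pos)))]
  exact funext (integral_pi_gaussianReal_add hv f) ▸ hderiv

end ProbabilityTheory

theorem score_function_gradient (p d : ℕ) (σ : ℝ) (hσ : 0 < σ)
    (π : (Fin p → ℝ) → (Fin d → ℝ)) (hπ : ContDiff ℝ 1 π)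
    (f : (Fin d → ℝ) → ℝ) (hfmeas : Measurable f) (hfbdd : ∃ C, ∀ y, |f y| ≤ C) :
    ∀ θ : Fin p → ℝ,
      DifferentiableAt ℝ (fun θ' => ∫ η, f (π θ' + η) ∂gaussPi d σ) θ ∧
      ∀ v : Fin p → ℝ,
        fderiv ℝ (fun θ' => ∫ η, f (π θ' + η) ∂gaussPi d σ) θ v =
          (1 / σ ^ 2) * ∑ i, (∫ η, f (π θ + η) * η i ∂gaussPi d σ) * fderiv ℝ π θ v i := by
  intro θ
  obtain ⟨C, hC⟩ := hfbdd
  have hvar : Real.toNNReal (σ ^ 2) ≠ 0 := by simpa using hσ.ne'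
  have hg : HasFDerivAt (fun θ' => ∫ η, f (π θ' + η) ∂gaussPi d σ) _ θ :=
    (hasFDerivAt_integral_pi_gaussianReal_add hvar hfmeas hC (π θ)).comp θ
      (hπ.differentiable one_ne_zero θ).hasFDerivAt
  refine ⟨hg.differentiableAt, fun v => ?_⟩
  rw [hg.fderiv]
  simp [Real.coe_toNNReal _ (sq_nonneg σ), gaussPi, dotProduct]
end

section
/- Consider the infinite-horizon average-cost LQR objective defined on stabilizing static gains: for K ∈ ℝ^{n_u×n_x} with spectral radius ρ(A + BK) < 1, let J(K) := Σ_{t=0}^{∞} tr( (Q + KᵀRK) · (A+BK)ᵗ Σ_w ((A+BK)ᵀ)ᵗ ), where Q ≻ 0, R ≻ 0, Σ_w ≻ 0. Suppose K* is a stabilizing gain minimizing J over all stabilizing gains. Then there exist constants ε₀ > 0 and C > 0 (depending on A, B, Q, R, Σ_w) such that every K with ‖K − K*‖₂ ≤ ε₀ is stabilizing and satisfies J(K) − J(K*) ≤ C·‖K − K*‖₂². -/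
/-!
Let `P` solve the Lyapunov equation `P = Q + K*ᵀ R K* + L*ᵀ P L*` of the optimal closed loop
`L* = A + B K*`. Telescoping `tr(P Σₜ)` along the state covariances `Σₜ` of any stabilizing `K`
gives `J(K) - J(K*) = Σₜ tr(G Σₜ)` with `G = ΔᵀE + EᵀΔ + Δᵀ(R + BᵀPB)Δ`, `Δ = K - K*` and
`E = R K* + BᵀP L*`. Optimality of `K*` forces `E = 0` (otherwise moving against `E` lowers the
cost), so the gap is quadratic in `Δ`. The constant is uniform because Schur stability is the open
condition `‖Lᴺ‖ < 1` for some `N`, which bounds `Σₜ ‖Lᵗ‖²` uniformly near `L*`.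
-/

open Matrix
open scoped ENNReal

/-- Schur stability: every (complex) eigenvalue of the real matrix `M` has modulus `< 1`. -/
def SchurStable {n : ℕ} (M : Matrix (Fin n) (Fin n) ℝ) : Prop :=
  ∀ z ∈ spectrum ℂ (M.map Complex.ofReal), ‖z‖ < 1

/-- Infinite-horizon average LQR cost of the static gain `K` (steady-state cost of
`u_t = K x_t` for `x_{t+1} = A x_t + B u_t + w_t`, `w_t ∼ N(0,Σ_w)` i.i.d.). -/
noncomputable def lqrCost {nx nu : ℕ} (A : Matrix (Fin nx) (Fin nx) ℝ)
    (B : Matrix (Fin nx) (Fin nu) ℝ) (Q : Matrix (Fin nx) (Fin nx) ℝ)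
    (R : Matrix (Fin nu) (Fin nu) ℝ) (Sw : Matrix (Fin nx) (Fin nx) ℝ)
    (K : Matrix (Fin nu) (Fin nx) ℝ) : ℝ :=
  ∑' t : ℕ, ((Q + Kᵀ * R * K) * ((A + B * K) ^ t * Sw * ((A + B * K)ᵀ) ^ t)).trace

open Filter Topology

section NormedRing

variable {𝔄 : Type*} [NormedRing 𝔄]

theorem norm_pow_mul_le (x y : 𝔄) (k : ℕ) : ‖x ^ k * y‖ ≤ ‖x‖ ^ k * ‖y‖ := by
  induction k with
  | zero => simp
  | succ k ih =>
    calc ‖x ^ (k + 1) * y‖ = ‖x * (x ^ k * y)‖ := by rw [pow_succ', mul_assoc]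
      _ ≤ ‖x‖ * (‖x‖ ^ k * ‖y‖) := (norm_mul_le _ _).trans (by gcongr)
      _ = ‖x‖ ^ (k + 1) * ‖y‖ := by ring

theorem norm_pow_le_of_norm_pow_le {x : 𝔄} {N : ℕ} {b r : ℝ} (hN : 0 < N) (hb : ‖x‖ ≤ b)
    (hb1 : 1 ≤ b) (hr0 : 0 < r) (hr1 : r ≤ 1) (hxN : ‖x ^ N‖ ≤ r ^ N) (t : ℕ) :
    ‖x ^ t‖ ≤ ‖(1 : 𝔄)‖ * (b / r) ^ N * r ^ t := by
  obtain ⟨k, j, hj, rfl⟩ : ∃ k j, j < N ∧ N * k + j = t :=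
    ⟨t / N, t % N, Nat.mod_lt t hN, Nat.div_add_mod t N⟩
  have hxj : ‖x‖ ^ j ≤ b ^ N :=
    (pow_le_pow_left₀ (norm_nonneg x) hb j).trans (pow_le_pow_right₀ hb1 hj.le)
  calc ‖x ^ (N * k + j)‖ = ‖(x ^ N) ^ k * (x ^ j * 1)‖ := by rw [mul_one, pow_add, pow_mul]
    _ ≤ ‖x ^ N‖ ^ k * (‖x‖ ^ j * ‖(1 : 𝔄)‖) :=
        (norm_pow_mul_le _ _ k).trans (by gcongr; exact norm_pow_mul_le _ _ j)
    _ ≤ (r ^ N) ^ k * (b ^ N * ‖(1 : 𝔄)‖) := by gcongr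
    _ = ‖(1 : 𝔄)‖ * (b / r) ^ N * (r ^ (N * k) * r ^ N) := by
        rw [div_pow, pow_mul]; field_simp
    _ ≤ ‖(1 : 𝔄)‖ * (b / r) ^ N * r ^ (N * k + j) := by
        rw [pow_add]
        exact mul_le_mul_of_nonneg_left
          (mul_le_mul_of_nonneg_left (pow_le_pow_of_le_one hr0.le hr1 hj.le) (by positivity))
          (by positivity)

theorem exists_mem_Ioo_lt_pow {q : ℝ} (hq : q < 1) (N : ℕ) :
    ∃ r ∈ Set.Ioo 0 1, q < r ^ N := by
  have hcont : Tendsto (fun r : ℝ => r ^ N) (𝓝[<] 1) (𝓝 1) := by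
    simpa using ((continuous_pow N).tendsto (1 : ℝ)).mono_left nhdsWithin_le_nhds
  obtain ⟨r, hqr, hr0, hr1⟩ :=
    ((hcont.eventually (lt_mem_nhds hq)).and (Ioo_mem_nhdsLT zero_lt_one)).exists
  exact ⟨r, ⟨hr0, hr1⟩, hqr⟩

theorem exists_nhds_norm_pow_le_geometric {a : 𝔄} {N : ℕ} (hN : 0 < N) (ha : ‖a ^ N‖ < 1) :
    ∃ c r : ℝ, 0 ≤ r ∧ r < 1 ∧ ∀ᶠ x in 𝓝 a, ∀ t, ‖x ^ t‖ ≤ c * r ^ t := by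
  obtain ⟨r, ⟨hr0, hr1⟩, har⟩ := exists_mem_Ioo_lt_pow ha N
  have hpow : ∀ᶠ x in 𝓝 a, ‖x ^ N‖ < r ^ N :=
    ((continuous_pow N).norm.tendsto a).eventually (gt_mem_nhds har)
  have hnorm : ∀ᶠ x in 𝓝 a, ‖x‖ < ‖a‖ + 1 :=
    (continuous_norm.tendsto a).eventually (gt_mem_nhds (lt_add_one _))
  refine ⟨‖(1 : 𝔄)‖ * (max 1 (‖a‖ + 1) / r) ^ N, r, hr0.le, hr1, ?_⟩
  filter_upwards [hpow, hnorm] with x hxN hx t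
  exact norm_pow_le_of_norm_pow_le hN (hx.le.trans (le_max_right _ _)) (le_max_left _ _) hr0
    hr1.le hxN.le t

theorem tendsto_pow_of_norm_pow_le_geometric {x : 𝔄} {c r : ℝ} (hr0 : 0 ≤ r) (hr1 : r < 1)
    (h : ∀ t, ‖x ^ t‖ ≤ c * r ^ t) : Tendsto (x ^ ·) atTop (𝓝 0) :=
  squeeze_zero_norm h (by simpa using (tendsto_pow_atTop_nhds_zero_of_lt_one hr0 hr1).const_mul c)

theorem tendsto_pow_atTop_nhds_zero_iff_exists_norm_pow_lt_one {a : 𝔄} :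
    Tendsto (a ^ ·) atTop (𝓝 0) ↔ ∃ N, 0 < N ∧ ‖a ^ N‖ < 1 := by
  refine ⟨fun h => ?_, fun ⟨N, hN, ha⟩ => ?_⟩
  · simpa using ((eventually_gt_atTop 0).and
      (h.norm.eventually (gt_mem_nhds (by simp : ‖(0 : 𝔄)‖ < 1)))).exists
  · obtain ⟨c, r, hr0, hr1, hx⟩ := exists_nhds_norm_pow_le_geometric hN ha
    exact tendsto_pow_of_norm_pow_le_geometric hr0 hr1 hx.self_of_nhds

theorem exists_nhds_tsum_sq_norm_pow_le {a : 𝔄} (ha : Tendsto (a ^ ·) atTop (𝓝 0)) :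
    ∃ S, ∀ᶠ x in 𝓝 a, Tendsto (x ^ ·) atTop (𝓝 0) ∧
      Summable (fun t => ‖x ^ t‖ ^ 2) ∧ ∑' t, ‖x ^ t‖ ^ 2 ≤ S := by
  obtain ⟨N, hN, haN⟩ := tendsto_pow_atTop_nhds_zero_iff_exists_norm_pow_lt_one.1 ha
  obtain ⟨c, r, hr0, hr1, hx⟩ := exists_nhds_norm_pow_le_geometric hN haN
  have hgeom : Summable (fun t => c ^ 2 * (r ^ 2) ^ t) :=
    (summable_geometric_of_lt_one (by positivity) (by nlinarith)).mul_left _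
  refine ⟨c ^ 2 * (1 - r ^ 2)⁻¹, ?_⟩
  filter_upwards [hx] with x hxt
  have hsq : ∀ t, ‖x ^ t‖ ^ 2 ≤ c ^ 2 * (r ^ 2) ^ t := fun t => by
    rw [← pow_mul, mul_comm 2, pow_mul, ← mul_pow]
    exact pow_le_pow_left₀ (norm_nonneg _) (hxt t) 2
  have hsum : Summable (fun t => ‖x ^ t‖ ^ 2) :=
    hgeom.of_nonneg_of_le (fun t => by positivity) hsq
  refine ⟨tendsto_pow_of_norm_pow_le_geometric hr0 hr1 hxt, hsum, ?_⟩
  calc ∑' t, ‖x ^ t‖ ^ 2 ≤ ∑' t, c ^ 2 * (r ^ 2) ^ t := hsum.tsum_le_tsum hsq hgeom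
    _ = c ^ 2 * (1 - r ^ 2)⁻¹ := by
        rw [tsum_mul_left, tsum_geometric_of_lt_one (by positivity) (by nlinarith)]

end NormedRing

open scoped Matrix.Norms.L2Operator

-- Stated through `Mᵗ → 0`, which does not depend on the choice of matrix norm.
theorem schurStable_iff_tendsto_pow {n : ℕ} {M : Matrix (Fin n) (Fin n) ℝ} :
    SchurStable M ↔ Tendsto (M ^ ·) atTop (𝓝 0) := by
  set a := M.map Complex.ofReal
  have hmap : ∀ t, a ^ t = (M ^ t).map Complex.ofReal := fun t =>
    (map_pow Complex.ofRealHom.mapMatrix M t).symm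
  constructor
  · intro hM
    have hρ : spectralRadius ℂ a < 1 := by
      rcases (spectrum ℂ a).eq_empty_or_nonempty with h | h
      · simp [spectralRadius, h]
      · exact_mod_cast spectrum.spectralRadius_lt_of_forall_lt_of_nonempty h (r := 1)
          fun z hz => by exact_mod_cast hM z hz
    obtain ⟨N, hN, haN⟩ := ((Filter.eventually_gt_atTop 0).and
      ((spectrum.pow_norm_pow_one_div_tendsto_nhds_spectralRadius a).eventually
        (gt_mem_nhds hρ))).exists
    have ha : Tendsto (a ^ ·) atTop (𝓝 0) := by
      refine tendsto_pow_atTop_nhds_zero_iff_exists_norm_pow_lt_one.2 ⟨N, hN, ?_⟩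
      exact (Real.rpow_lt_one_iff' (norm_nonneg _) (by positivity)).1 (ENNReal.ofReal_lt_one.1 haN)
    have := ((continuous_id.matrix_map Complex.continuous_re).tendsto 0).comp ha
    simpa [Function.comp_def, hmap, Matrix.map_map] using this
  · intro hM z hz
    have ha : Tendsto (a ^ ·) atTop (𝓝 0) := by
      have := ((continuous_id.matrix_map Complex.continuous_ofReal).tendsto 0).comp hM
      simpa [Function.comp_def, hmap] using this
    have hz : Tendsto (fun t => ‖z‖ ^ t) atTop (𝓝 0) := by
      refine squeeze_zero_norm (fun t => ?_)
        (by simpa using ha.norm.mul_const ‖(1 : Matrix (Fin n) (Fin n) ℂ)‖)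
      rw [norm_pow, norm_norm, ← norm_pow]
      exact spectrum.norm_le_norm_mul_of_mem (spectrum.pow_mem_pow a t hz)
    simpa using tendsto_pow_atTop_nhds_zero_iff.1 hz

section StationaryCost

variable {ι κ : Type*} [Fintype ι] [Fintype κ]

theorem Matrix.l2_opNorm_transpose [DecidableEq ι] [DecidableEq κ] (M : Matrix ι κ ℝ) :
    ‖Mᵀ‖ = ‖M‖ := by
  rw [← conjTranspose_eq_transpose_of_trivial, l2_opNorm_conjTranspose]

theorem Matrix.abs_apply_le_l2_opNorm [DecidableEq κ] (M : Matrix ι κ ℝ) (i : ι) (j : κ) :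
    |M i j| ≤ ‖M‖ :=
  calc |M i j| = ‖(EuclideanSpace.equiv ι ℝ).symm (M *ᵥ EuclideanSpace.single j 1) i‖ := by
        simp [mulVec_single]
    _ ≤ ‖(EuclideanSpace.equiv ι ℝ).symm (M *ᵥ EuclideanSpace.single j 1)‖ :=
        PiLp.norm_apply_le _ _
    _ ≤ ‖M‖ * ‖EuclideanSpace.single j (1 : ℝ)‖ := l2_opNorm_mulVec _ _
    _ = ‖M‖ := by simp

theorem Matrix.abs_trace_le_l2_opNorm [DecidableEq ι] (X : Matrix ι ι ℝ) :
    |X.trace| ≤ Fintype.card ι * ‖X‖ :=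
  calc |X.trace| ≤ ∑ i, |X i i| := Finset.abs_sum_le_sum_abs _ _
    _ ≤ ∑ _i : ι, ‖X‖ := Finset.sum_le_sum fun i _ => X.abs_apply_le_l2_opNorm i i
    _ = Fintype.card ι * ‖X‖ := by simp

theorem Matrix.trace_mul_mul_transpose_pos {Sw : Matrix ι ι ℝ} (hSw : Sw.PosDef)
    {E : Matrix κ ι ℝ} (hE : E ≠ 0) : 0 < (E * Sw * Eᵀ).trace := by
  obtain ⟨i, hi⟩ : ∃ i, E i ≠ 0 := by
    by_contra! h
    exact hE (funext h)
  have hdiag : ∀ k, (E * Sw * Eᵀ) k k = E k ⬝ᵥ (Sw *ᵥ E k) := fun k => by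
    rw [dotProduct_mulVec, mul_apply']; rfl
  simp only [trace, diag_apply, hdiag]
  refine Finset.sum_pos' (fun k _ => ?_) ⟨i, Finset.mem_univ i, ?_⟩
  · simpa using hSw.posSemidef.dotProduct_mulVec_nonneg (E k)
  · simpa using hSw.dotProduct_mulVec_pos hi

theorem Matrix.norm_transpose_mul_mul_le [DecidableEq ι] [DecidableEq κ] (C : Matrix ι ι ℝ)
    (Δ : Matrix ι κ ℝ) : ‖Δᵀ * C * Δ‖ ≤ ‖C‖ * ‖Δ‖ ^ 2 :=
  calc ‖Δᵀ * C * Δ‖ ≤ ‖Δᵀ‖ * ‖C‖ * ‖Δ‖ :=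
        (l2_opNorm_mul _ _).trans (by gcongr; exact l2_opNorm_mul _ _)
    _ = ‖C‖ * ‖Δ‖ ^ 2 := by rw [l2_opNorm_transpose]; ring

variable [DecidableEq ι] {L Sw : Matrix ι ι ℝ}

/-- Steady-state mean of `xᵀ X x` along `x_{t+1} = L x_t + w_t` with `Cov w_t = Sw`. -/
noncomputable def stationaryCost (L Sw X : Matrix ι ι ℝ) : ℝ :=
  ∑' t : ℕ, (X * (L ^ t * Sw * Lᵀ ^ t)).trace

theorem norm_pow_mul_mul_transpose_pow_le (L Sw : Matrix ι ι ℝ) (t : ℕ) :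
    ‖L ^ t * Sw * Lᵀ ^ t‖ ≤ ‖Sw‖ * ‖L ^ t‖ ^ 2 := by
  have h := norm_transpose_mul_mul_le Sw (L ^ t)ᵀ
  rwa [transpose_transpose, l2_opNorm_transpose, transpose_pow] at h

theorem abs_trace_mul_pow_mul_mul_transpose_pow_le (X : Matrix ι ι ℝ) (t : ℕ) :
    |(X * (L ^ t * Sw * Lᵀ ^ t)).trace| ≤ Fintype.card ι * ‖X‖ * ‖Sw‖ * ‖L ^ t‖ ^ 2 :=
  calc |(X * (L ^ t * Sw * Lᵀ ^ t)).trace| ≤ Fintype.card ι * ‖X * (L ^ t * Sw * Lᵀ ^ t)‖ :=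
        abs_trace_le_l2_opNorm _
    _ ≤ Fintype.card ι * (‖X‖ * (‖Sw‖ * ‖L ^ t‖ ^ 2)) := by
        gcongr
        exact (norm_mul_le _ _).trans (by gcongr; exact norm_pow_mul_mul_transpose_pow_le L Sw t)
    _ = Fintype.card ι * ‖X‖ * ‖Sw‖ * ‖L ^ t‖ ^ 2 := by ring

@[simp]
theorem stationaryCost_zero : stationaryCost L Sw 0 = 0 := by
  simp [stationaryCost]

theorem stationaryCost_smul (c : ℝ) (X : Matrix ι ι ℝ) :
    stationaryCost L Sw (c • X) = c * stationaryCost L Sw X := by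
  simp only [stationaryCost, smul_mul, trace_smul, smul_eq_mul, tsum_mul_left]

variable (hL : Summable fun t => ‖L ^ t‖ ^ 2)
include hL

theorem summable_trace_mul_pow_mul_mul_transpose_pow (X : Matrix ι ι ℝ) :
    Summable fun t => (X * (L ^ t * Sw * Lᵀ ^ t)).trace :=
  .of_norm_bounded (hL.mul_left _) fun t =>
    (Real.norm_eq_abs _).trans_le (abs_trace_mul_pow_mul_mul_transpose_pow_le X t)

theorem abs_stationaryCost_le (X : Matrix ι ι ℝ) :
    |stationaryCost L Sw X| ≤ Fintype.card ι * ‖X‖ * ‖Sw‖ * ∑' t, ‖L ^ t‖ ^ 2 :=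
  (Real.norm_eq_abs _).symm.trans_le <| tsum_of_norm_bounded (hL.hasSum.mul_left _) fun t =>
    (Real.norm_eq_abs _).trans_le (abs_trace_mul_pow_mul_mul_transpose_pow_le X t)

theorem stationaryCost_add (X Y : Matrix ι ι ℝ) :
    stationaryCost L Sw (X + Y) = stationaryCost L Sw X + stationaryCost L Sw Y := by
  simp only [stationaryCost, add_mul, trace_add]
  exact (summable_trace_mul_pow_mul_mul_transpose_pow hL X).tsum_add
    (summable_trace_mul_pow_mul_mul_transpose_pow hL Y)

theorem stationaryCost_sub (X Y : Matrix ι ι ℝ) :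
    stationaryCost L Sw (X - Y) = stationaryCost L Sw X - stationaryCost L Sw Y := by
  simp only [stationaryCost, sub_mul, trace_sub]
  exact (summable_trace_mul_pow_mul_mul_transpose_pow hL X).tsum_sub
    (summable_trace_mul_pow_mul_mul_transpose_pow hL Y)

theorem stationaryCost_lyapunov (P : Matrix ι ι ℝ) :
    stationaryCost L Sw (Lᵀ * P * L - P) = -(P * Sw).trace := by
  set f : ℕ → ℝ := fun t => (P * (L ^ t * Sw * Lᵀ ^ t)).trace
  have hf : Summable f := summable_trace_mul_pow_mul_mul_transpose_pow hL P
  have hstep : ∀ t, ((Lᵀ * P * L - P) * (L ^ t * Sw * Lᵀ ^ t)).trace = f (t + 1) - f t := by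
    intro t
    rw [sub_mul, trace_sub]
    congr 1
    simp only [f, pow_succ' L, pow_succ Lᵀ, Matrix.mul_assoc]
    rw [trace_mul_comm]
    simp only [Matrix.mul_assoc]
  calc stationaryCost L Sw (Lᵀ * P * L - P) = ∑' t, (f (t + 1) - f t) := tsum_congr hstep
    _ = -f 0 := by
        rw [((summable_nat_add_iff 1).2 hf).tsum_sub hf, hf.tsum_eq_zero_add]; ring
    _ = -(P * Sw).trace := by simp [f]

theorem stationaryCost_eq_trace_add (M P : Matrix ι ι ℝ) :
    stationaryCost L Sw M = (P * Sw).trace + stationaryCost L Sw (M + Lᵀ * P * L - P) := by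
  rw [add_sub_assoc, stationaryCost_add hL, stationaryCost_lyapunov hL]; ring

theorem trace_mul_mul_transpose_le_stationaryCost (hSw : Sw.PosSemidef) (E : Matrix κ ι ℝ) :
    (E * Sw * Eᵀ).trace ≤ stationaryCost L Sw (Eᵀ * E) := by
  have hterm : ∀ t, 0 ≤ (Eᵀ * E * (L ^ t * Sw * Lᵀ ^ t)).trace := fun t => by
    have hW := (hSw.mul_mul_conjTranspose_same (L ^ t)).mul_mul_conjTranspose_same E
    rw [Matrix.mul_assoc, trace_mul_comm]
    simpa only [conjTranspose_eq_transpose_of_trivial, transpose_pow] using hW.trace_nonneg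
  calc (E * Sw * Eᵀ).trace = (Eᵀ * E * (L ^ 0 * Sw * Lᵀ ^ 0)).trace := by
        rw [pow_zero, pow_zero, Matrix.one_mul, Matrix.mul_one, trace_mul_comm (E * Sw),
          Matrix.mul_assoc]
    _ ≤ stationaryCost L Sw (Eᵀ * E) :=
        (summable_trace_mul_pow_mul_mul_transpose_pow hL _).le_tsum 0 fun t _ => hterm t

theorem stationaryCost_transpose_mul_mul_le [DecidableEq κ] {S : ℝ}
    (hS : ∑' t, ‖L ^ t‖ ^ 2 ≤ S) (C : Matrix κ κ ℝ) (Δ : Matrix κ ι ℝ) :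
    stationaryCost L Sw (Δᵀ * C * Δ) ≤ Fintype.card ι * ‖C‖ * ‖Sw‖ * S * ‖Δ‖ ^ 2 :=
  calc stationaryCost L Sw (Δᵀ * C * Δ)
      ≤ Fintype.card ι * ‖Δᵀ * C * Δ‖ * ‖Sw‖ * ∑' t, ‖L ^ t‖ ^ 2 :=
        (le_abs_self _).trans (abs_stationaryCost_le hL _)
    _ ≤ Fintype.card ι * (‖C‖ * ‖Δ‖ ^ 2) * ‖Sw‖ * S := by
        gcongr
        exact norm_transpose_mul_mul_le C Δ
    _ = Fintype.card ι * ‖C‖ * ‖Sw‖ * S * ‖Δ‖ ^ 2 := by ring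

theorem exists_lyapunov_solution {M : Matrix ι ι ℝ} (hM : Mᵀ = M) :
    ∃ P : Matrix ι ι ℝ, Pᵀ = P ∧ M + Lᵀ * P * L = P := by
  set g : ℕ → Matrix ι ι ℝ := fun t => Lᵀ ^ t * M * L ^ t
  have hg : Summable g := .of_norm_bounded (hL.mul_left ‖M‖) fun t => by
    simpa only [g, transpose_pow] using norm_transpose_mul_mul_le M (L ^ t)
  have hsucc : ∀ t, g (t + 1) = Lᵀ * g t * L := fun t => by
    simp only [g, pow_succ' Lᵀ, pow_succ L, Matrix.mul_assoc]
  refine ⟨∑' t, g t, ?_, ?_⟩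
  · rw [transpose_tsum]
    congr 1
    ext1 t
    simp only [g, transpose_mul, transpose_pow, transpose_transpose, hM, Matrix.mul_assoc]
  · calc M + Lᵀ * (∑' t, g t) * L = g 0 + ∑' t, g (t + 1) := by
          rw [← hg.tsum_mul_left, ← (hg.mul_left _).tsum_mul_right]
          simp only [hsucc, show g 0 = M by simp [g]]
      _ = ∑' t, g t := hg.tsum_eq_zero_add.symm

end StationaryCost

section LQR

theorem specNormR_eq_l2_opNorm {m n : Type*} [Fintype m] [Fintype n] [DecidableEq n]
    (M : Matrix m n ℝ) : specNormR M = ‖M‖ := rfl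

variable {ι κ : Type*} [Fintype ι] [Fintype κ]

theorem lqr_gap_matrix_eq [DecidableEq ι] (A Q P : Matrix ι ι ℝ) (B : Matrix ι κ ℝ)
    {R : Matrix κ κ ℝ} (hR : Rᵀ = R) (hP : Pᵀ = P) (K Δ : Matrix κ ι ℝ) :
    Q + (K + Δ)ᵀ * R * (K + Δ) + (A + B * (K + Δ))ᵀ * P * (A + B * (K + Δ)) - P =
      (Q + Kᵀ * R * K + (A + B * K)ᵀ * P * (A + B * K) - P)
        + Δᵀ * (R * K + Bᵀ * P * (A + B * K)) + (R * K + Bᵀ * P * (A + B * K))ᵀ * Δ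
        + Δᵀ * (R + Bᵀ * P * B) * Δ := by
  simp only [transpose_add, transpose_mul, transpose_transpose, hR, hP, Matrix.add_mul,
    Matrix.mul_add, Matrix.mul_assoc]
  abel

theorem lqrCost_eq_stationaryCost {n m : ℕ} (A : Matrix (Fin n) (Fin n) ℝ)
    (B : Matrix (Fin n) (Fin m) ℝ) (Q : Matrix (Fin n) (Fin n) ℝ) (R : Matrix (Fin m) (Fin m) ℝ)
    (Sw : Matrix (Fin n) (Fin n) ℝ) (K : Matrix (Fin m) (Fin n) ℝ) :
    lqrCost A B Q R Sw K = stationaryCost (A + B * K) Sw (Q + Kᵀ * R * K) := rfl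

theorem lqrCost_add_sub_lqrCost {n m : ℕ} {A Q Sw P : Matrix (Fin n) (Fin n) ℝ}
    {B : Matrix (Fin n) (Fin m) ℝ} {R : Matrix (Fin m) (Fin m) ℝ} {K Δ : Matrix (Fin m) (Fin n) ℝ}
    (hR : Rᵀ = R) (hP : Pᵀ = P) (hLyap : Q + Kᵀ * R * K + (A + B * K)ᵀ * P * (A + B * K) = P)
    (hK : Summable fun t => ‖(A + B * K) ^ t‖ ^ 2)
    (hKΔ : Summable fun t => ‖(A + B * (K + Δ)) ^ t‖ ^ 2) :
    lqrCost A B Q R Sw (K + Δ) - lqrCost A B Q R Sw K =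
      stationaryCost (A + B * (K + Δ)) Sw
        (Δᵀ * (R * K + Bᵀ * P * (A + B * K)) + (R * K + Bᵀ * P * (A + B * K))ᵀ * Δ
          + Δᵀ * (R + Bᵀ * P * B) * Δ) := by
  have hres : Q + Kᵀ * R * K + (A + B * K)ᵀ * P * (A + B * K) - P = 0 := sub_eq_zero.2 hLyap
  rw [lqrCost_eq_stationaryCost, lqrCost_eq_stationaryCost, stationaryCost_eq_trace_add hK _ P,
    stationaryCost_eq_trace_add hKΔ _ P, lqr_gap_matrix_eq A Q P B hR hP, hres]
  rw [stationaryCost_zero, zero_add]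
  ring

theorem SchurStable.exists_ball_tsum_sq_norm_pow_le {n m : ℕ} {A : Matrix (Fin n) (Fin n) ℝ}
    {B : Matrix (Fin n) (Fin m) ℝ} {K : Matrix (Fin m) (Fin n) ℝ} (hK : SchurStable (A + B * K)) :
    ∃ ε > (0 : ℝ), ∃ S, ∀ Δ : Matrix (Fin m) (Fin n) ℝ, ‖Δ‖ ≤ ε →
      SchurStable (A + B * (K + Δ)) ∧ Summable (fun t => ‖(A + B * (K + Δ)) ^ t‖ ^ 2) ∧
        ∑' t, ‖(A + B * (K + Δ)) ^ t‖ ^ 2 ≤ S := by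
  obtain ⟨S, hS⟩ := exists_nhds_tsum_sq_norm_pow_le (schurStable_iff_tendsto_pow.1 hK)
  obtain ⟨δ, hδ, hball⟩ := Metric.eventually_nhds_iff.1 hS
  refine ⟨δ / (‖B‖ + 1), by positivity, S, fun Δ hΔ => ?_⟩
  have hdist : dist (A + B * (K + Δ)) (A + B * K) < δ :=
    calc dist (A + B * (K + Δ)) (A + B * K) = ‖B * Δ‖ := by
          rw [dist_eq_norm, Matrix.mul_add]; congr 1; abel
      _ ≤ ‖B‖ * (δ / (‖B‖ + 1)) := (l2_opNorm_mul B Δ).trans (by gcongr)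
      _ < δ := by
          rw [mul_div_assoc', div_lt_iff₀ (by positivity)]; nlinarith [norm_nonneg B]
  obtain ⟨hpow, hsum⟩ := hball hdist
  exact ⟨schurStable_iff_tendsto_pow.2 hpow, hsum⟩

theorem eq_zero_of_stationaryCost_quadratic_nonneg [DecidableEq ι] [DecidableEq κ]
    {Sw : Matrix ι ι ℝ} (hSw : Sw.PosDef) {L : Matrix κ ι ℝ → Matrix ι ι ℝ}
    {E : Matrix κ ι ℝ} {C : Matrix κ κ ℝ} {ε S : ℝ} (hε : 0 < ε)
    (hL : ∀ Δ, ‖Δ‖ ≤ ε → Summable (fun t => ‖L Δ ^ t‖ ^ 2) ∧ ∑' t, ‖L Δ ^ t‖ ^ 2 ≤ S)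
    (hmin : ∀ Δ, ‖Δ‖ ≤ ε → 0 ≤ stationaryCost (L Δ) Sw (Δᵀ * E + Eᵀ * Δ + Δᵀ * C * Δ)) :
    E = 0 := by
  by_contra hE
  set c₀ := (E * Sw * Eᵀ).trace
  have hc₀ : 0 < c₀ := trace_mul_mul_transpose_pos hSw hE
  set a := Fintype.card ι * ‖C‖ * ‖Sw‖ * S * ‖E‖ ^ 2
  -- Along `Δ = -η E` the form is `η² EᵀCE - 2η EᵀE`, negative for small `η > 0`.
  have hsmall : ∀ᶠ η in 𝓝 (0 : ℝ), ‖η • E‖ < ε ∧ η * a < 2 * c₀ := by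
    have h₁ : Tendsto (fun η : ℝ => ‖η • E‖) (𝓝 0) (𝓝 0) := by
      simpa using ((continuous_id.smul continuous_const).norm.tendsto (0 : ℝ) :
        Tendsto (fun η : ℝ => ‖η • E‖) _ _)
    have h₂ : Tendsto (fun η : ℝ => η * a) (𝓝 0) (𝓝 0) := by
      simpa using (continuous_mul_const a).tendsto (0 : ℝ)
    exact (h₁.eventually (gt_mem_nhds hε)).and (h₂.eventually (gt_mem_nhds (by positivity)))
  obtain ⟨η, ⟨hηε, hηa⟩, hη⟩ :=
    ((hsmall.filter_mono nhdsWithin_le_nhds).and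
      (self_mem_nhdsWithin (s := Set.Ioi (0 : ℝ)))).exists
  have hΔ : ‖-(η • E)‖ ≤ ε := by rw [norm_neg]; exact hηε.le
  obtain ⟨hsum, hS⟩ := hL _ hΔ
  have hform : (-(η • E))ᵀ * E + Eᵀ * -(η • E) + (-(η • E))ᵀ * C * -(η • E)
      = (η * η) • (Eᵀ * C * E) - (2 * η) • (Eᵀ * E) := by
    simp only [transpose_neg, transpose_smul, Matrix.neg_mul, Matrix.mul_neg, Matrix.smul_mul,
      Matrix.mul_smul]
    module
  have hquad := stationaryCost_transpose_mul_mul_le (Sw := Sw) hsum hS C E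
  have hlin := trace_mul_mul_transpose_le_stationaryCost hsum hSw.posSemidef E
  have hneg := hmin _ hΔ
  rw [hform, stationaryCost_sub hsum, stationaryCost_smul, stationaryCost_smul] at hneg
  have hη0 : (0 : ℝ) < η := hη
  nlinarith [mul_le_mul_of_nonneg_left hquad (by positivity : (0 : ℝ) ≤ η * η)]

end LQR

theorem certainty_equivalence_quadratic_gap (nx nu : ℕ)
    (A : Matrix (Fin nx) (Fin nx) ℝ) (B : Matrix (Fin nx) (Fin nu) ℝ)
    (Q : Matrix (Fin nx) (Fin nx) ℝ) (R : Matrix (Fin nu) (Fin nu) ℝ)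
    (Sw : Matrix (Fin nx) (Fin nx) ℝ)
    (hQ : Q.PosDef) (hR : R.PosDef) (hSw : Sw.PosDef)
    (Kstar : Matrix (Fin nu) (Fin nx) ℝ)
    (hKstar : SchurStable (A + B * Kstar))
    (hopt : ∀ K : Matrix (Fin nu) (Fin nx) ℝ, SchurStable (A + B * K) →
      lqrCost A B Q R Sw Kstar ≤ lqrCost A B Q R Sw K) :
    ∃ ε₀ > (0 : ℝ), ∃ C > (0 : ℝ), ∀ K : Matrix (Fin nu) (Fin nx) ℝ,
      specNormR (K - Kstar) ≤ ε₀ →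
        SchurStable (A + B * K) ∧
        lqrCost A B Q R Sw K - lqrCost A B Q R Sw Kstar ≤ C * specNormR (K - Kstar) ^ 2 := by
  have hRt : Rᵀ = R := by rw [← conjTranspose_eq_transpose_of_trivial, hR.isHermitian.eq]
  have hQt : Qᵀ = Q := by rw [← conjTranspose_eq_transpose_of_trivial, hQ.isHermitian.eq]
  obtain ⟨ε₀, hε₀, S, hnear⟩ := hKstar.exists_ball_tsum_sq_norm_pow_le
  have hstar := hnear 0 (by simpa using hε₀.le)
  simp only [add_zero] at hstar
  have hMt : (Q + Kstarᵀ * R * Kstar)ᵀ = Q + Kstarᵀ * R * Kstar := by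
    simp only [transpose_add, transpose_mul, transpose_transpose, hQt, hRt, Matrix.mul_assoc]
  obtain ⟨P, hPt, hLyap⟩ := exists_lyapunov_solution hstar.2.1 hMt
  have hgap := fun Δ (hΔ : ‖Δ‖ ≤ ε₀) =>
    lqrCost_add_sub_lqrCost (Sw := Sw) hRt hPt hLyap hstar.2.1 (hnear Δ hΔ).2.1
  have hE : R * Kstar + Bᵀ * P * (A + B * Kstar) = 0 :=
    eq_zero_of_stationaryCost_quadratic_nonneg hSw hε₀ (fun Δ hΔ => (hnear Δ hΔ).2)
      fun Δ hΔ => hgap Δ hΔ ▸ sub_nonneg.2 (hopt _ (hnear Δ hΔ).1)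
  have hS0 : 0 ≤ S := (tsum_nonneg fun t => by positivity).trans hstar.2.2
  refine ⟨ε₀, hε₀, Fintype.card (Fin nx) * ‖R + Bᵀ * P * B‖ * ‖Sw‖ * S + 1, by positivity,
    fun K hK => ?_⟩
  obtain ⟨Δ, rfl⟩ : ∃ Δ, K = Kstar + Δ := ⟨K - Kstar, by abel⟩
  rw [specNormR_eq_l2_opNorm, add_sub_cancel_left] at hK ⊢
  refine ⟨(hnear Δ hK).1, ?_⟩
  rw [hgap Δ hK, hE, Matrix.mul_zero, transpose_zero, Matrix.zero_mul, add_zero, zero_add]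
  calc _ ≤ Fintype.card (Fin nx) * ‖R + Bᵀ * P * B‖ * ‖Sw‖ * S * ‖Δ‖ ^ 2 :=
        stationaryCost_transpose_mul_mul_le (hnear Δ hK).2.1 (hnear Δ hK).2.2 _ Δ
    _ ≤ _ := by gcongr; linarith
end
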